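/- Let σ : W → X be a surjection of finite sets, R_σ : R_X → R_W the induced algebra map (x ↦ Σ_{σ(w)=x} w), and Ξ_σ : Ξ_X → Ξ_W the F-linear map sending ∏_{x}ξ_x^{-n_x} to the sum of all ∏_w ξ_w^{-n_w} over tuples (n_w) with Σ_{σ(w)=x} n_w = n_x for each x. Then for every w ∈ W, multiplication by ξ_w on Ξ_W satisfies ξ_w ∘ Ξ_σ = Ξ_σ ∘ ξ_{σ(w)}. -/
import Mathlib


/-!
STATEMENT 9: Let σ : W → X be a surjection of finite sets and Ξ_σ : Ξ_X → Ξ_W the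
F-linear map sending the monomial ∏_x ξ_x^{-n_x} to the sum of all ∏_w ξ_w^{-n_w}
over tuples (n_w) with Σ_{σ(w)=x} n_w = n_x for each x (i.e. over m : W →₀ ℕ with
pushforward mapDomain σ m = n).  Then ξ_w ∘ Ξ_σ = Ξ_σ ∘ ξ_{σ(w)} for every w ∈ W.
-/

set_option synthInstance.maxHeartbeats 1000000
set_option maxHeartbeats 1000000

noncomputable section

abbrev F2 := ZMod 2

abbrev XiX (X : Type) : Type := (X →₀ ℕ) →₀ F2

def ximon {X : Type} (n : X →₀ ℕ) : XiX X := Finsupp.single n 1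

def xiMul {X : Type} [DecidableEq X] (x : X) : XiX X →ₗ[F2] XiX X :=
  Finsupp.lsum F2 fun n =>
    if n x = 0 then (0 : F2 →ₗ[F2] XiX X)
    else Finsupp.lsingle (n - Finsupp.single x 1)

open Finsupp

lemma le_mapDomain' {W X : Type} (σ : W → X) (m : W →₀ ℕ) (w : W) :
    m w ≤ mapDomain σ m (σ w) := by
  classical
  rw [mapDomain, Finsupp.sum_apply]
  by_cases h : w ∈ m.support
  · have := Finset.single_le_sum
      (f := fun a => (single (σ a) (m a) : X →₀ ℕ) (σ w))
      (fun i _ => Nat.zero_le _) h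
    simpa [Finsupp.sum] using this
  · simp [Finsupp.notMem_support_iff.mp h]

def fiber {W X : Type} [Fintype W] [DecidableEq W] [DecidableEq X]
    (σ : W → X) (n : X →₀ ℕ) : Finset (W →₀ ℕ) :=
  (Finset.Iic (equivFunOnFinite.symm fun w => n (σ w))).filter
    fun m => mapDomain σ m = n

lemma mem_fiber {W X : Type} [Fintype W] [DecidableEq W] [DecidableEq X]
    (σ : W → X) (n : X →₀ ℕ) (m : W →₀ ℕ) :
    m ∈ fiber σ n ↔ mapDomain σ m = n := by
  constructor
  · intro h; exact (Finset.mem_filter.mp h).2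
  · intro h
    refine Finset.mem_filter.mpr ⟨Finset.mem_Iic.mpr ?_, h⟩
    intro w
    have := le_mapDomain' σ m w
    rw [h] at this
    simpa using this

theorem stmt9 (W X : Type) [Fintype W] [Fintype X] [DecidableEq W] [DecidableEq X]
    (σ : W → X) (hσ : Function.Surjective σ) :
    ∃ Ξσ : XiX X →ₗ[F2] XiX W,
      -- Ξ_σ sends a monomial ∏ ξ_x^{-n_x} to the sum of all monomials ∏ ξ_w^{-n_w}
      -- with Σ_{σ(w)=x} n_w = n_x for each x
      (∀ n : X →₀ ℕ,
        Ξσ (ximon n) = ∑ᶠ m ∈ {m : W →₀ ℕ | Finsupp.mapDomain σ m = n}, ximon m) ∧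
      -- and ξ_w ∘ Ξ_σ = Ξ_σ ∘ ξ_{σ(w)} for all w
      ∀ w : W, (xiMul w).comp Ξσ = Ξσ.comp (xiMul (σ w)) := by
  classical
  set Ξσ : XiX X →ₗ[F2] XiX W :=
    Finsupp.lsum F2 (fun n => ∑ m ∈ fiber σ n, Finsupp.lsingle m) with hΞ
  have hmon : ∀ n : X →₀ ℕ, Ξσ (ximon n) = ∑ m ∈ fiber σ n, ximon m := by
    intro n
    simp [hΞ, ximon, Finsupp.lsum_single, LinearMap.sum_apply]
  have hset : ∀ n : X →₀ ℕ,
      {m : W →₀ ℕ | Finsupp.mapDomain σ m = n} = ↑(fiber σ n) := by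
    intro n; ext m; simp [mem_fiber]
  refine ⟨Ξσ, ?_, ?_⟩
  · intro n
    rw [hmon, hset, finsum_mem_coe_finset]
  · intro w
    -- key computation on monomials
    have key : ∀ n : X →₀ ℕ,
        xiMul w (Ξσ (ximon n)) = Ξσ (xiMul (σ w) (ximon n)) := by
      intro n
      rw [hmon, map_sum]
      have hterm : ∀ m : W →₀ ℕ,
          xiMul w (ximon m) =
            if m w = 0 then 0 else ximon (m - Finsupp.single w 1) := by
        intro m
        simp only [xiMul, ximon, Finsupp.lsum_single]
        split <;> simp
      simp_rw [hterm]
      by_cases h : n (σ w) = 0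
      · have hz : ∀ m ∈ fiber σ n, m w = 0 := by
          intro m hm
          have h1 := le_mapDomain' σ m w
          rw [(mem_fiber σ n m).mp hm, h] at h1
          omega
        rw [Finset.sum_congr rfl (fun m hm => if_pos (hz m hm))]
        simp [xiMul, ximon, Finsupp.lsum_single, h]
      · have hrhs : xiMul (σ w) (ximon n) = ximon (n - Finsupp.single (σ w) 1) := by
          simp [xiMul, ximon, Finsupp.lsum_single, h]
        rw [hrhs, hmon]
        -- turn LHS into a sum over a filter
        have : (∑ m ∈ fiber σ n,
            if m w = 0 then (0 : XiX W) else ximon (m - Finsupp.single w 1)) =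
            ∑ m ∈ (fiber σ n).filter (fun m => ¬ m w = 0),
              ximon (m - Finsupp.single w 1) := by
          rw [Finset.sum_filter]
          refine Finset.sum_congr rfl fun m _ => ?_
          by_cases hm : m w = 0 <;> simp [hm]
        rw [this]
        have hle : Finsupp.single (σ w) 1 ≤ n := by
          rw [Finsupp.single_le_iff]; omega
        refine Finset.sum_nbij' (fun m => m - Finsupp.single w 1)
          (fun m' => m' + Finsupp.single w 1) ?_ ?_ ?_ ?_ ?_
        · intro m hm
          obtain ⟨hm1, hm2⟩ := Finset.mem_filter.mp hm
          have hmw : Finsupp.single w 1 ≤ m := by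
            rw [Finsupp.single_le_iff]; omega
          have hadd : m - Finsupp.single w 1 + Finsupp.single w 1 = m :=
            tsub_add_cancel_of_le hmw
          rw [mem_fiber]
          have : mapDomain σ (m - Finsupp.single w 1) + Finsupp.single (σ w) 1 = n := by
            rw [← (mem_fiber σ n m).mp hm1, ← mapDomain_single (a := w) (b := 1),
              ← mapDomain_add, hadd]
          exact eq_tsub_of_add_eq this
        · intro m' hm'
          rw [mem_fiber] at hm'
          refine Finset.mem_filter.mpr ⟨?_, ?_⟩
          · rw [mem_fiber, mapDomain_add, hm', mapDomain_single,
              tsub_add_cancel_of_le hle]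
          · simp
        · intro m hm
          obtain ⟨_, hm2⟩ := Finset.mem_filter.mp hm
          have hmw : Finsupp.single w 1 ≤ m := by
            rw [Finsupp.single_le_iff]; omega
          exact tsub_add_cancel_of_le hmw
        · intro m' _
          exact add_tsub_cancel_right m' _
        · intro m _
          rfl
    apply Finsupp.lhom_ext
    intro n b
    have hb : (Finsupp.single n b : XiX X) = b • ximon n := by
      simp [ximon, Finsupp.smul_single]
    simp only [LinearMap.comp_apply, hb, map_smul, key]
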